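/- arXiv:1907.01222 — 3 statements merged into one kernel-verified Lean document; each statement's English description precedes it below -/
import Mathlib

section
/- (Sylvester) For a numerical semigroup S = ⟨a, b⟩ generated by two coprime integers a, b ≥ 2, S is symmetric: the number of gaps equals (f(S)+1)/2 where f(S) = ab - a - b, i.e., g(S) = (a-1)(b-1)/2. -/
/-!
Every integer has a unique representation `n = x * a + y * b` with `0 ≤ x < b`, and `n` lies in
`⟨a, b⟩` exactly when `y ≥ 0` in it. Since `f - n = (b - 1 - x) * a + (-1 - y) * b` with
`f = a * b - a - b` is again such a representation, exactly one of `n` and `f - n` lies in the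
semigroup. Hence `n ↦ f - n` exchanges the gaps with the elements of `[0, f]`, so `f` is the
largest gap and the gaps fill half of the `f + 1` points of `[0, f]`.
-/

def twoGenSemigroup (a b : ℤ) : Set ℤ := {n | ∃ l m : ℕ, n = l * a + m * b}

section TwoGenSemigroup

variable {a b : ℤ}

theorem mem_twoGenSemigroup_iff {n : ℤ} :
    n ∈ twoGenSemigroup a b ↔ ∃ x y : ℤ, 0 ≤ x ∧ 0 ≤ y ∧ n = x * a + y * b := by
  constructor
  · rintro ⟨l, m, rfl⟩
    exact ⟨l, m, l.cast_nonneg, m.cast_nonneg, rfl⟩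
  · rintro ⟨x, y, hx, hy, rfl⟩
    exact ⟨x.toNat, y.toNat, by rw [Int.toNat_of_nonneg hx, Int.toNat_of_nonneg hy]⟩

theorem zero_mem_twoGenSemigroup : (0 : ℤ) ∈ twoGenSemigroup a b :=
  ⟨0, 0, by simp⟩

theorem nonneg_of_mem_twoGenSemigroup (ha : 0 ≤ a) (hb : 0 ≤ b) {n : ℤ}
    (hn : n ∈ twoGenSemigroup a b) : 0 ≤ n := by
  obtain ⟨l, m, rfl⟩ := hn
  positivity

theorem IsCoprime.exists_eq_mul_add_mul (hab : IsCoprime a b) (hb : 0 < b) (n : ℤ) :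
    ∃ x y : ℤ, 0 ≤ x ∧ x < b ∧ n = x * a + y * b := by
  obtain ⟨u, v, huv⟩ := hab
  refine ⟨n * u % b, n * u / b * a + n * v, Int.emod_nonneg _ hb.ne', Int.emod_lt_of_pos _ hb, ?_⟩
  linear_combination (-n) * huv - a * Int.emod_add_mul_ediv (n * u) b

theorem IsCoprime.eq_of_mul_add_mul_eq (hab : IsCoprime a b) (hb : 0 < b) {x₁ y₁ x₂ y₂ : ℤ}
    (hx₁ : 0 ≤ x₁) (hx₁b : x₁ < b) (hx₂ : 0 ≤ x₂) (hx₂b : x₂ < b)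
    (h : x₁ * a + y₁ * b = x₂ * a + y₂ * b) : x₁ = x₂ ∧ y₁ = y₂ := by
  have hdvd : b ∣ x₁ - x₂ :=
    hab.symm.dvd_of_dvd_mul_right ⟨y₂ - y₁, by linear_combination h⟩
  have hx : x₁ = x₂ :=
    sub_eq_zero.mp (Int.eq_zero_of_abs_lt_dvd hdvd (abs_sub_lt_iff.mpr ⟨by omega, by omega⟩))
  subst hx
  exact ⟨rfl, mul_right_cancel₀ hb.ne' (by linarith)⟩

theorem mem_twoGenSemigroup_iff_of_eq (hab : IsCoprime a b) (ha : 0 ≤ a) (hb : 0 < b)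
    {n x y : ℤ} (hx : 0 ≤ x) (hxb : x < b) (hn : n = x * a + y * b) :
    n ∈ twoGenSemigroup a b ↔ 0 ≤ y := by
  rw [mem_twoGenSemigroup_iff]
  refine ⟨?_, fun hy => ⟨x, y, hx, hy, hn⟩⟩
  rintro ⟨x', y', hx', hy', rfl⟩
  have hreduce : x' * a + y' * b = x' % b * a + (x' / b * a + y') * b := by
    linear_combination a * (Int.emod_add_mul_ediv x' b).symm
  obtain ⟨-, rfl⟩ := hab.eq_of_mul_add_mul_eq hb hx hxb (Int.emod_nonneg _ hb.ne')
    (Int.emod_lt_of_pos _ hb) (hn.symm.trans hreduce)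
  have : 0 ≤ x' / b := Int.ediv_nonneg hx' hb.le
  positivity

theorem sub_mem_twoGenSemigroup_iff (hab : IsCoprime a b) (ha : 0 ≤ a) (hb : 0 < b) (n : ℤ) :
    a * b - a - b - n ∈ twoGenSemigroup a b ↔ n ∉ twoGenSemigroup a b := by
  obtain ⟨x, y, hx, hxb, hn⟩ := hab.exists_eq_mul_add_mul hb n
  have hdual : a * b - a - b - n = (b - 1 - x) * a + (-1 - y) * b := by rw [hn]; ring
  rw [mem_twoGenSemigroup_iff_of_eq hab ha hb (by omega) (by omega) hdual,
    mem_twoGenSemigroup_iff_of_eq hab ha hb hx hxb hn]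
  omega

theorem frobenius_not_mem_twoGenSemigroup (hab : IsCoprime a b) (ha : 0 ≤ a) (hb : 0 < b) :
    a * b - a - b ∉ twoGenSemigroup a b := by
  rw [← sub_zero (a * b - a - b), sub_mem_twoGenSemigroup_iff hab ha hb, not_not]
  exact zero_mem_twoGenSemigroup

theorem le_frobenius_of_not_mem_twoGenSemigroup (hab : IsCoprime a b) (ha : 0 ≤ a) (hb : 0 < b)
    {n : ℤ} (hn : n ∉ twoGenSemigroup a b) : n ≤ a * b - a - b := by
  have := nonneg_of_mem_twoGenSemigroup ha hb.le
    ((sub_mem_twoGenSemigroup_iff hab ha hb n).mpr hn)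
  linarith

end TwoGenSemigroup

theorem two_mul_ncard_eq_of_sub_mem_iff {s : Set ℤ} {f : ℤ} (hs : s ⊆ Set.Icc 0 f)
    (hsymm : ∀ n ∈ Set.Icc 0 f, f - n ∈ s ↔ n ∉ s) : 2 * s.ncard = (f + 1).toNat := by
  have himage : (f - ·) '' s = Set.Icc 0 f \ s := by
    ext m
    constructor
    · rintro ⟨n, hn, rfl⟩
      have hnI := hs hn
      refine ⟨⟨by linarith [hnI.2], by linarith [hnI.1]⟩, ?_⟩
      rw [hsymm n hnI, not_not]
      exact hn
    · rintro ⟨hmI, hm⟩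
      have hfm : f - m ∈ Set.Icc 0 f := ⟨by linarith [hmI.2], by linarith [hmI.1]⟩
      refine ⟨f - m, ?_, sub_sub_cancel f m⟩
      rwa [← sub_sub_cancel f m, hsymm (f - m) hfm, not_not] at hm
  have hcard := Set.ncard_sdiff_add_ncard_of_subset hs (Set.finite_Icc 0 f)
  rw [← himage, Set.ncard_image_of_injective s sub_right_injective, ← Finset.coe_Icc,
    Set.ncard_coe_finset, Int.card_Icc, sub_zero] at hcard
  omega

/-- Sylvester: `S = ⟨a,b⟩` with `a,b ≥ 2` coprime is symmetric:
`f(S) = ab - a - b` and `g(S) = (a-1)(b-1)/2`. -/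
theorem sylvester (a b : ℤ) (ha : 2 ≤ a) (hb : 2 ≤ b) (hco : IsCoprime a b)
    (S : Set ℤ)
    (hS : S = {n : ℤ | ∃ l m : ℕ, n = (l : ℤ) * a + (m : ℤ) * b}) :
    IsGreatest {n : ℤ | 0 ≤ n ∧ n ∉ S} (a * b - a - b) ∧
    2 * ({n : ℤ | 0 ≤ n ∧ n ∉ S}.ncard : ℤ) = (a - 1) * (b - 1) := by
  change S = twoGenSemigroup a b at hS
  subst hS
  have ha0 : 0 ≤ a := by omega
  have hb0 : 0 < b := by omega
  have hf : 0 ≤ a * b - a - b := by nlinarith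
  have hgaps : {n : ℤ | 0 ≤ n ∧ n ∉ twoGenSemigroup a b} ⊆ Set.Icc 0 (a * b - a - b) :=
    fun n hn => ⟨hn.1, le_frobenius_of_not_mem_twoGenSemigroup hco ha0 hb0 hn.2⟩
  refine ⟨⟨⟨hf, frobenius_not_mem_twoGenSemigroup hco ha0 hb0⟩, fun n hn => (hgaps hn).2⟩, ?_⟩
  have hcount := two_mul_ncard_eq_of_sub_mem_iff hgaps fun n hn => by
    simp only [Set.mem_ofPred_eq, sub_mem_twoGenSemigroup_iff hco ha0 hb0, not_not, hn.1, true_and]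
    exact ⟨fun h => h.2, fun h => ⟨by linarith [hn.2], h⟩⟩
  zify at hcount
  rw [Int.toNat_of_nonneg (by omega)] at hcount
  linear_combination hcount
end

section
/- Let S = ⟨a₁,...,a_k⟩ with a₁ < ... < a_k and gcd 1, S ≠ ℤ≥0. Then g(S) = (f(S)+1)/2 if and only if the type set T(S) = {m ∈ Ap(S,a_k) : m + a_i ∉ Ap(S,a_k) for all i} has exactly one element. -/
/-!
Both sides say that `S` is symmetric: `x ∉ S → f - x ∈ S`. Since `x ↦ f - x` maps `S ∩ [0, f]`
injectively into the gaps, `2 g(S) - (f + 1)` counts the gaps `x` for which `f - x` is also a gap.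
The type set is the set of pseudo-Frobenius numbers (`x ∉ S` with `x + aᵢ ∈ S` for all `i`)
shifted by `aₖ`, and `f` is one of them. Any other one `x` makes `f - x` a gap; conversely, if `S`
is not symmetric, the largest gap `x` with `f - x ∉ S` is pseudo-Frobenius, since a gap `x + aᵢ`
would contradict its maximality.
-/

open Finset

namespace AddSubmonoid

theorem add_mem_closure_of_forall_add_mem {A : Type*} [AddCommMonoid A] {t : Set A}
    {x s : A} (hx : ∀ b ∈ t, x + b ∈ closure t) (hs : s ∈ closure t) (hs0 : s ≠ 0) :
    x + s ∈ closure t := by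
  suffices s = 0 ∨ x + s ∈ closure t from this.resolve_left hs0
  clear hs0
  induction hs using closure_induction with
  | mem b hb => exact .inr (hx b hb)
  | zero => exact .inl rfl
  | add u v _ hv hu' hv' =>
    rcases hu' with rfl | hu'
    · simpa using hv'
    · exact .inr (by simpa only [add_assoc] using add_mem hu' hv)

end AddSubmonoid

namespace NumericalSemigroup

section Symmetry

variable {S : AddSubmonoid ℤ} {f : ℤ}

theorem mem_of_frobenius_lt (hf : IsGreatest {n : ℤ | 0 ≤ n ∧ n ∉ S} f) {n : ℤ} (hn : f < n) :
    n ∈ S := by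
  by_contra hnS
  exact hn.not_ge (hf.2 ⟨hf.1.1.trans hn.le, hnS⟩)

theorem card_filter_Icc_sub (p : ℤ → Prop) [DecidablePred p] (f : ℤ) :
    #{x ∈ Icc 0 f | p (f - x)} = #{x ∈ Icc 0 f | p x} := by
  refine card_nbij' (f - ·) (f - ·) ?_ ?_ (fun x _ ↦ sub_sub_cancel f x)
    (fun x _ ↦ sub_sub_cancel f x) <;>
  · intro x hx
    simp only [coe_filter, mem_Icc, Set.mem_ofPred_eq, sub_sub_cancel] at hx ⊢
    exact ⟨⟨by omega, by omega⟩, hx.2⟩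

open scoped Classical in
theorem two_mul_ncard_gaps (hf : IsGreatest {n : ℤ | 0 ≤ n ∧ n ∉ S} f) :
    2 * ({n : ℤ | 0 ≤ n ∧ n ∉ S}.ncard : ℤ) = f + 1 + #{x ∈ Icc 0 f | x ∉ S ∧ f - x ∉ S} := by
  have hgaps : {n : ℤ | 0 ≤ n ∧ n ∉ S} = ↑{x ∈ Icc 0 f | x ∉ S} := by
    ext n
    simp only [Set.mem_ofPred_eq, coe_filter, mem_Icc]
    exact ⟨fun h ↦ ⟨⟨h.1, hf.2 h⟩, h.2⟩, fun h ↦ ⟨h.1.1, h.2⟩⟩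
  -- `f - x ∈ S` forces `x ∉ S`, because `f ∉ S`
  have hdual : #{x ∈ Icc 0 f | x ∉ S ∧ f - x ∈ S} = #{x ∈ Icc 0 f | x ∈ S} := by
    rw [← card_filter_Icc_sub (· ∈ S) f]
    congr 1
    refine filter_congr fun x _ ↦ ⟨And.right, fun h ↦ ⟨fun hx ↦ hf.1.2 ?_, h⟩⟩
    simpa using add_mem hx h
  have hsplit := card_filter_add_card_filter_not (s := {x ∈ Icc 0 f | x ∉ S}) (f - · ∈ S)
  have htotal := card_filter_add_card_filter_not (s := Icc 0 f) (· ∈ S)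
  simp only [filter_filter, Int.card_Icc] at hsplit htotal
  rw [hgaps, Set.ncard_coe_finset]
  have := hf.1.1
  omega

theorem two_mul_ncard_gaps_eq_iff (hf : IsGreatest {n : ℤ | 0 ≤ n ∧ n ∉ S} f) :
    2 * ({n : ℤ | 0 ≤ n ∧ n ∉ S}.ncard : ℤ) = f + 1 ↔ ∀ x ∉ S, f - x ∈ S := by
  classical
  rw [two_mul_ncard_gaps hf, add_eq_left, Nat.cast_eq_zero, card_eq_zero, filter_eq_empty_iff]
  refine ⟨fun h x hx ↦ ?_, fun h x _ hx ↦ hx.2 (h x hx.1)⟩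
  by_cases hx0 : 0 ≤ x
  · by_contra hfx
    exact h (mem_Icc.2 ⟨hx0, hf.2 ⟨hx0, hx⟩⟩) ⟨hx, hfx⟩
  · exact mem_of_frobenius_lt hf (by omega)

end Symmetry

section PseudoFrobenius

/-- Pseudo-Frobenius numbers of the monoid generated by `a`: the usual condition `x + s ∈ S` for
all `s ∈ S \ {0}` is only tested on the generators, which suffices by
`AddSubmonoid.add_mem_closure_of_forall_add_mem`. -/
def IsPseudoFrobenius {ι : Type*} (a : ι → ℤ) (x : ℤ) : Prop :=
  x ∉ AddSubmonoid.closure (Set.range a) ∧ ∀ i, x + a i ∈ AddSubmonoid.closure (Set.range a)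

variable {ι : Type*} {a : ι → ℤ}

local notation "𝒮" => AddSubmonoid.closure (Set.range a)

theorem isPseudoFrobenius_frobenius (ha : ∀ i, 0 < a i)
    {f : ℤ} (hf : IsGreatest {n : ℤ | 0 ≤ n ∧ n ∉ 𝒮} f) :
    IsPseudoFrobenius a f :=
  ⟨hf.1.2, fun i ↦ mem_of_frobenius_lt hf (lt_add_of_pos_right f (ha i))⟩

theorem IsPseudoFrobenius.sub_notMem {x y : ℤ} (hx : IsPseudoFrobenius a x)
    (hy : y ∉ 𝒮) (hxy : y ≠ x) : y - x ∉ 𝒮 := by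
  intro hyx
  have hgen : ∀ b ∈ Set.range a, x + b ∈ 𝒮 := Set.forall_mem_range.2 hx.2
  exact hy (add_sub_cancel x y ▸
    AddSubmonoid.add_mem_closure_of_forall_add_mem hgen hyx (sub_ne_zero.2 hxy))

theorem forall_isPseudoFrobenius_eq_iff (ha : ∀ i, 0 < a i)
    {f : ℤ} (hf : IsGreatest {n : ℤ | 0 ≤ n ∧ n ∉ 𝒮} f) :
    (∀ x, IsPseudoFrobenius a x → x = f) ↔ ∀ x ∉ 𝒮, f - x ∈ 𝒮 := by
  constructor
  · intro huniq
    by_contra! hasym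
    have hbdd : ∀ x, x ∉ 𝒮 ∧ f - x ∉ 𝒮 → x ≤ f :=
      fun x hx ↦ not_lt.1 fun hfx ↦ hx.1 (mem_of_frobenius_lt hf hfx)
    obtain ⟨x, ⟨hxS, hfx⟩, hmax⟩ := Int.exists_greatest_of_bdd ⟨f, hbdd⟩ hasym
    have hxPF : IsPseudoFrobenius a x := by
      refine ⟨hxS, fun i ↦ ?_⟩
      by_contra hxi
      have hfxi : f - (x + a i) ∈ 𝒮 := by
        by_contra h
        exact (hmax _ ⟨hxi, h⟩).not_gt (lt_add_of_pos_right x (ha i))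
      rw [show f - x = f - (x + a i) + a i by ring] at hfx
      exact hfx (add_mem hfxi (AddSubmonoid.subset_closure (Set.mem_range_self i)))
    exact hfx (by simp [huniq x hxPF])
  · intro hsym x hx
    by_contra hxf
    exact (IsPseudoFrobenius.sub_notMem hx hf.1.2 (Ne.symm hxf)) (hsym x hx.1)

theorem typeSet_iff_isPseudoFrobenius (j : ι) (m : ℤ) :
    ((m ∈ 𝒮 ∧ m - a j ∉ 𝒮) ∧
      ∀ i, ¬ (m + a i ∈ 𝒮 ∧ (m + a i) - a j ∉ 𝒮)) ↔
    IsPseudoFrobenius a (m - a j) := by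
  have hgen : ∀ i, a i ∈ 𝒮 := fun i ↦ AddSubmonoid.subset_closure (Set.mem_range_self i)
  simp only [IsPseudoFrobenius, not_and, not_not, sub_add_eq_add_sub]
  constructor
  · rintro ⟨⟨hm, hmj⟩, h⟩
    exact ⟨hmj, fun i ↦ h i (add_mem hm (hgen i))⟩
  · rintro ⟨hmj, h⟩
    have hm : m ∈ 𝒮 := by simpa using h j
    exact ⟨⟨hm, hmj⟩, fun i _ ↦ h i⟩

theorem existsUnique_typeSet_iff (j : ι) :
    (∃! m : ℤ, (m ∈ 𝒮 ∧ m - a j ∉ 𝒮) ∧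
      ∀ i, ¬ (m + a i ∈ 𝒮 ∧ (m + a i) - a j ∉ 𝒮)) ↔
    ∃! x, IsPseudoFrobenius a x := by
  simp only [typeSet_iff_isPseudoFrobenius]
  exact (Equiv.subRight (a j)).existsUnique_congr_right

end PseudoFrobenius

end NumericalSemigroup

open NumericalSemigroup in
theorem gorenstein_iff_type_one_general (k : ℕ) (a : Fin (k + 1) → ℤ)
    (hpos : ∀ i, 1 ≤ a i)
    (S : Set ℤ)
    (hS : S = {n : ℤ | ∃ l : Fin (k + 1) → ℕ, n = ∑ i, (l i : ℤ) * a i})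
    (f : ℤ) (hf : IsGreatest {n : ℤ | 0 ≤ n ∧ n ∉ S} f) :
    2 * ({n : ℤ | 0 ≤ n ∧ n ∉ S}.ncard : ℤ) = f + 1 ↔
    ∃! m : ℤ, (m ∈ S ∧ m - a (Fin.last k) ∉ S) ∧
      ∀ i : Fin (k + 1),
        ¬ (m + a i ∈ S ∧ (m + a i) - a (Fin.last k) ∉ S) := by
  obtain rfl : S = AddSubmonoid.closure (Set.range a) := by
    ext n
    simp [hS, AddSubmonoid.mem_closure_range_iff_of_fintype]
  simp only [SetLike.mem_coe] at hf ⊢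
  have ha : ∀ i, 0 < a i := hpos
  rw [two_mul_ncard_gaps_eq_iff hf, ← forall_isPseudoFrobenius_eq_iff ha hf,
    existsUnique_typeSet_iff]
  have hfpf := isPseudoFrobenius_frobenius ha hf
  exact ⟨fun h ↦ ⟨f, hfpf, h⟩, fun h x hx ↦ h.unique hx hfpf⟩

/-- `g(S) = (f(S)+1)/2` iff the type set `T(S)` has exactly one element. -/
theorem gorenstein_iff_type_one (k : ℕ) (a : Fin (k + 1) → ℤ)
    (hmono : StrictMono a) (hpos : ∀ i, 1 ≤ a i)
    (hgcd : Finset.univ.gcd a = 1)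
    (S : Set ℤ)
    (hS : S = {n : ℤ | ∃ l : Fin (k + 1) → ℕ, n = ∑ i, (l i : ℤ) * a i})
    (hne : S ≠ {n : ℤ | 0 ≤ n})
    (hfin : {n : ℤ | 0 ≤ n ∧ n ∉ S}.Finite)
    (f : ℤ) (hf : IsGreatest {n : ℤ | 0 ≤ n ∧ n ∉ S} f) :
    2 * ({n : ℤ | 0 ≤ n ∧ n ∉ S}.ncard : ℤ) = f + 1 ↔
    ∃! m : ℤ, (m ∈ S ∧ m - a (Fin.last k) ∉ S) ∧
      ∀ i : Fin (k + 1),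
        ¬ (m + a i ∈ S ∧ (m + a i) - a (Fin.last k) ∉ S) :=
  gorenstein_iff_type_one_general k a hpos S hS f hf
end

section
/- Let S ⊆ ℤ^d be an affine monoid generated by nonzero elements a₁,...,a_k and let Λ ⊆ {a₁,...,a_k} be such that the rational cones satisfy pos(S) = pos(Λ). Then the Apéry set Ap(S,Λ) = {a ∈ S : a - b ∉ S for all b ∈ Λ} is finite. -/
/-!
If some multiple `N • aᵢ` of a generator is a combination of generators with a positive
coefficient at some `b ∈ Λ`, then `N • aᵢ - b ∈ S`. Consequently an element `∑ lᵢ • aᵢ` of the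
Apéry set has `lᵢ < N` for every `i`, since otherwise `N • aᵢ` could be traded for `b` and the
element minus `b` would remain in `S`. The hypothesis `pos(S) = pos(Λ)` provides such
multiples after clearing the denominators of the rational cone coefficients.
-/

open Set

def aperySet {M : Type*} [AddCommGroup M] (S : AddSubmonoid M) (B : Set M) : Set M :=
  {x ∈ S | ∀ b ∈ B, x - b ∉ S}

theorem AddSubmonoid.sum_nsmul_sub_nsmul_mem_closure {M ι : Type*} [AddCommGroup M] [Fintype ι]
    (a : ι → M) (m : ι → ℕ) {i : ι} {n : ℕ} (hn : n ≤ m i) :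
    ∑ t, m t • a t - n • a i ∈ AddSubmonoid.closure (range a) := by
  classical
  have hle : ∀ t, (Pi.single i n : ι → ℕ) t ≤ m t := by
    intro t
    rcases eq_or_ne t i with rfl | h
    · simpa using hn
    · simp [h]
  have : ∑ t, m t • a t - n • a i = ∑ t, (m t - (Pi.single i n : ι → ℕ) t) • a t := by
    rw [Finset.sum_congr rfl fun t _ => sub_nsmul (a t) (hle t), Finset.sum_add_distrib]
    simp [Pi.single_apply, sub_eq_add_neg]
  rw [this, AddSubmonoid.mem_closure_range_iff_of_fintype]
  exact ⟨_, rfl⟩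

theorem finite_aperySet_closure_range {M ι : Type*} [AddCommGroup M] [Fintype ι]
    (a : ι → M) (Λ : Set ι)
    (h : ∀ i, ∃ N : ℕ, ∃ j ∈ Λ, N • a i - a j ∈ AddSubmonoid.closure (range a)) :
    (aperySet (AddSubmonoid.closure (range a)) (a '' Λ)).Finite := by
  choose N j hjΛ hj using h
  refine (finite_range fun l : ∀ i, Fin (N i) => ∑ i, (l i : ℕ) • a i).subset ?_
  rintro x ⟨hx, hap⟩
  obtain ⟨l, rfl⟩ := (AddSubmonoid.mem_closure_range_iff_of_fintype).1 hx
  suffices hl : ∀ i, l i < N i from ⟨fun i => ⟨l i, hl i⟩, rfl⟩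
  intro i
  by_contra! hi
  refine hap _ (mem_image_of_mem a (hjΛ i)) ?_
  rw [← sub_add_sub_cancel _ (N i • a i)]
  exact add_mem (AddSubmonoid.sum_nsmul_sub_nsmul_mem_closure a l hi) (hj i)

theorem Rat.exists_pos_nat_forall_natCast_eq_mul {ι : Type*} [Fintype ι] (μ : ι → ℚ)
    (hμ : ∀ j, 0 ≤ μ j) : ∃ N : ℕ, 0 < N ∧ ∃ n : ι → ℕ, ∀ j, (n j : ℚ) = N * μ j := by
  refine ⟨∏ j, (μ j).den, Finset.prod_pos fun j _ => (μ j).pos, ?_⟩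
  suffices h : ∀ j, ∃ n : ℕ, (n : ℚ) = (∏ j, (μ j).den : ℕ) * μ j by
    choose n hn using h
    exact ⟨n, hn⟩
  intro j
  obtain ⟨c, hc⟩ := Finset.dvd_prod_of_mem (fun j => (μ j).den) (Finset.mem_univ j)
  lift (μ j).num to ℕ using Rat.num_nonneg.2 (hμ j) with p hp
  refine ⟨c * p, ?_⟩
  rw [hc]
  push_cast
  rw [← Int.cast_natCast p, hp, ← Rat.mul_den_eq_num]
  ring

theorem exists_nsmul_eq_sum_nsmul_of_cast_eq_sum_smul {σ ι : Type*} [Fintype ι]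
    (v : σ → ℤ) (a : ι → σ → ℤ) (μ : ι → ℚ) (hμ : ∀ j, 0 ≤ μ j)
    (h : (fun t => (v t : ℚ)) = ∑ j, μ j • fun t => (a j t : ℚ)) :
    ∃ N : ℕ, 0 < N ∧ ∃ m : ι → ℕ, (∀ j, μ j = 0 → m j = 0) ∧ N • v = ∑ j, m j • a j := by
  obtain ⟨N, hN, m, hm⟩ := Rat.exists_pos_nat_forall_natCast_eq_mul μ hμ
  refine ⟨N, hN, m, fun j hj => (Nat.cast_eq_zero (R := ℚ)).1 (by rw [hm, hj, mul_zero]), ?_⟩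
  funext t
  have ht := congrFun h t
  simp only [Finset.sum_apply, Pi.smul_apply] at ht ⊢
  simp only [smul_eq_mul, nsmul_eq_mul] at ht ⊢
  apply Int.cast_injective (α := ℚ)
  push_cast
  rw [ht, Finset.mul_sum]
  exact Finset.sum_congr rfl fun j _ => by rw [hm]; ring

theorem exists_nsmul_sub_mem_closure_of_cast_eq_sum_smul {σ ι : Type*} [Fintype ι]
    {v : σ → ℤ} (hv : v ≠ 0) (a : ι → σ → ℤ) {Λ : Set ι} (μ : ι → ℚ) (hμ : ∀ j, 0 ≤ μ j)
    (hμΛ : ∀ j, j ∉ Λ → μ j = 0) (h : (fun t => (v t : ℚ)) = ∑ j, μ j • fun t => (a j t : ℚ)) :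
    ∃ N : ℕ, ∃ j ∈ Λ, N • v - a j ∈ AddSubmonoid.closure (range a) := by
  obtain ⟨N, hN, m, hm0, hNm⟩ := exists_nsmul_eq_sum_nsmul_of_cast_eq_sum_smul v a μ hμ h
  obtain ⟨j, hj⟩ : ∃ j, m j ≠ 0 := by
    by_contra! hm
    simp only [hm, zero_smul, Finset.sum_const_zero] at hNm
    exact hv ((smul_eq_zero.1 hNm).resolve_left hN.ne')
  refine ⟨N, j, not_imp_comm.1 (hm0 j ∘ hμΛ j) hj, ?_⟩
  rw [hNm]
  simpa using AddSubmonoid.sum_nsmul_sub_nsmul_mem_closure a m (Nat.one_le_iff_ne_zero.2 hj)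

theorem apery_affine_finite_general (d k : ℕ) (a : Fin k → (Fin d → ℤ))
    (hanz : ∀ i, a i ≠ 0)
    (Λ : Finset (Fin k))
    (S : Set (Fin d → ℤ))
    (hS : S = {v : Fin d → ℤ | ∃ l : Fin k → ℕ, v = ∑ i, (l i : ℤ) • a i})
    (hcone : ∀ i : Fin k, ∃ μ : Fin k → ℚ, (∀ j, 0 ≤ μ j) ∧
        (∀ j, j ∉ Λ → μ j = 0) ∧
        (fun t => (a i t : ℚ)) = ∑ j, μ j • (fun t => (a j t : ℚ))) :
    {x ∈ S | ∀ b ∈ Λ, x - a b ∉ S}.Finite := by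
  have hS' : S = AddSubmonoid.closure (range a) := by
    ext x
    simp [hS, AddSubmonoid.mem_closure_range_iff_of_fintype]
  have hmultiple : ∀ i, ∃ N : ℕ, ∃ j ∈ (Λ : Set (Fin k)),
      N • a i - a j ∈ AddSubmonoid.closure (range a) := fun i =>
    let ⟨μ, hμ, hμΛ, hμa⟩ := hcone i
    exists_nsmul_sub_mem_closure_of_cast_eq_sum_smul (hanz i) a μ hμ hμΛ hμa
  subst hS'
  simpa [aperySet] using finite_aperySet_closure_range a Λ hmultiple

/-- For a pointed affine monoid `S ⊆ ℤ^d` generated by nonzero `a₁,...,a_k` and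
`Λ ⊆ {a₁,...,a_k}` with `pos(S) = pos(Λ)`, the Apéry set
`Ap(S,Λ) = {a ∈ S : a - b ∉ S for all b ∈ Λ}` is finite. -/
theorem apery_affine_finite (d k : ℕ) (a : Fin k → (Fin d → ℤ))
    (hanz : ∀ i, a i ≠ 0)
    (Λ : Finset (Fin k))
    (S : Set (Fin d → ℤ))
    (hS : S = {v : Fin d → ℤ | ∃ l : Fin k → ℕ, v = ∑ i, (l i : ℤ) • a i})
    (hpointed : ∀ x ∈ S, -x ∈ S → x = 0)
    (hcone : ∀ i : Fin k, ∃ μ : Fin k → ℚ, (∀ j, 0 ≤ μ j) ∧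
        (∀ j, j ∉ Λ → μ j = 0) ∧
        (fun t => (a i t : ℚ)) = ∑ j, μ j • (fun t => (a j t : ℚ))) :
    {x ∈ S | ∀ b ∈ Λ, x - a b ∉ S}.Finite :=
  apery_affine_finite_general d k a hanz Λ S hS hcone
end
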